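/- arXiv:1112.2065 — 5 statements merged into one kernel-verified Lean document; each statement's English description precedes it below -/
import Mathlib

section
/- Let ≺ be a total ordering on the set M of monomials of P such that (i) 1 ⪯ m for all m ∈ M and (ii) m ≺ n implies tm ≺ tn for all m, n, t ∈ M. Then ≺ is a well-ordering of M (hence a monomial ordering of P) if and only if the restriction of ≺ to the variable set X(Σ) = {x(σ) : x ∈ X, σ ∈ Σ} is a well-ordering. -/
/- Common setup: the monoid Σ = ⟨σ₁,…,σ_r⟩ ≅ (ℕ^r,+) is modelled additively as
`Fin r → ℕ`; the algebra of partial difference polynomials `P = K[X(Σ)]` is the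
polynomial ring `MvPolynomial (X × (Fin r → ℕ)) K`, and its monomials are elements
of `(X × (Fin r → ℕ)) →₀ ℕ`. -/

noncomputable section

/-- The total degree `deg : Σ → ℕ` of an element of the monoid `Σ ≅ ℕ^r`. -/
def degS {r : ℕ} (σ : Fin r → ℕ) : ℕ := ∑ i, σ i

/-- The shift action of `σ ∈ Σ` on monomials: `σ · ∏ xᵢ(τᵢ)^{aᵢ} = ∏ xᵢ(στᵢ)^{aᵢ}`. -/
def shiftMon {V : Type*} {r : ℕ} (σ : Fin r → ℕ) (m : (V × (Fin r → ℕ)) →₀ ℕ) :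
    (V × (Fin r → ℕ)) →₀ ℕ :=
  Finsupp.mapDomain (fun p => (p.1, σ + p.2)) m

/-- The shift action of `σ ∈ Σ` on `P` by `K`-algebra endomorphisms,
determined by `σ · x(τ) = x(στ)`. -/
def shiftPoly (K : Type*) [CommSemiring K] {V : Type*} {r : ℕ} (σ : Fin r → ℕ) :
    MvPolynomial (V × (Fin r → ℕ)) K →ₐ[K] MvPolynomial (V × (Fin r → ℕ)) K :=
  MvPolynomial.rename (fun p => (p.1, σ + p.2))

/-- The orbit set `Σ · G` of a set of polynomials `G`. -/
def shiftSet (K : Type*) [CommSemiring K] {V : Type*} {r : ℕ}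
    (G : Set (MvPolynomial (V × (Fin r → ℕ)) K)) :
    Set (MvPolynomial (V × (Fin r → ℕ)) K) :=
  {p | ∃ (σ : Fin r → ℕ) (g : MvPolynomial (V × (Fin r → ℕ)) K), g ∈ G ∧ p = shiftPoly K σ g}

/-- The least common multiple of two monomials (pointwise maximum of exponents). -/
def lcmMon {V : Type*} {r : ℕ} (m n : (V × (Fin r → ℕ)) →₀ ℕ) : (V × (Fin r → ℕ)) →₀ ℕ :=
  Finsupp.zipWith max (max_self 0) m n

/-- The greatest common divisor of two monomials (pointwise minimum of exponents). -/
def gcdMon {V : Type*} {r : ℕ} (m n : (V × (Fin r → ℕ)) →₀ ℕ) : (V × (Fin r → ℕ)) →₀ ℕ :=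
  Finsupp.zipWith min (min_self 0) m n

/-- The strict relation of a linear order given as a term. -/
def oLT {α : Type*} (lo : LinearOrder α) (a b : α) : Prop := lo.lt a b

/-- The non-strict relation of a linear order given as a term. -/
def oLE {α : Type*} (lo : LinearOrder α) (a b : α) : Prop := lo.le a b

/-- `lo` is a *monomial ordering* of an additive (monomial) monoid: a linear order
which is a well-order, has the monomial `1` (written additively: `0`) as least
element, and is compatible with multiplication (written additively). -/
structure IsMonOrd {α : Type*} [AddCommMonoid α] (lo : LinearOrder α) : Prop where
  wf : WellFounded (oLT lo)
  zero_le : ∀ a : α, oLE lo 0 a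
  add_lt : ∀ a b c : α, oLT lo a b → oLT lo (c + a) (c + b)

/-- The leading monomial of a polynomial with respect to a monomial ordering
(junk value `1`, i.e. `0`, on the zero polynomial). -/
def lmo {K V : Type*} [CommSemiring K] {r : ℕ} (lo : LinearOrder ((V × (Fin r → ℕ)) →₀ ℕ))
    (f : MvPolynomial (V × (Fin r → ℕ)) K) : (V × (Fin r → ℕ)) →₀ ℕ :=
  haveI : Decidable (f = 0) := Classical.dec _
  if h : f = 0 then 0
  else @Finset.max' _ lo f.support
    (Finset.nonempty_iff_ne_empty.2 fun he => h (MvPolynomial.support_eq_empty.mp he))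

/-- The leading coefficient of a polynomial. -/
def lco {K V : Type*} [CommSemiring K] {r : ℕ} (lo : LinearOrder ((V × (Fin r → ℕ)) →₀ ℕ))
    (f : MvPolynomial (V × (Fin r → ℕ)) K) : K :=
  MvPolynomial.coeff (lmo lo f) f

/-- The S-polynomial `spoly(f,g) = (l/lt(f))·f − (l/lt(g))·g`, where
`l = lcm(lm f, lm g)`. -/
def spoly {K V : Type*} [Field K] {r : ℕ} (lo : LinearOrder ((V × (Fin r → ℕ)) →₀ ℕ))
    (f g : MvPolynomial (V × (Fin r → ℕ)) K) : MvPolynomial (V × (Fin r → ℕ)) K :=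
  MvPolynomial.monomial (lcmMon (lmo lo f) (lmo lo g) - lmo lo f) (lco lo f)⁻¹ * f -
  MvPolynomial.monomial (lcmMon (lmo lo f) (lmo lo g) - lmo lo g) (lco lo g)⁻¹ * g

/-- `f` has a Gröbner representation `f = ∑ qᵢ gᵢ` with respect to `G`:
`gᵢ ∈ G` and `lm(f) ⪰ lm(qᵢ)·lm(gᵢ)` for all (nontrivial) `i`. -/
def HasGroebnerRep {K V : Type*} [Field K] {r : ℕ}
    (lo : LinearOrder ((V × (Fin r → ℕ)) →₀ ℕ))
    (G : Set (MvPolynomial (V × (Fin r → ℕ)) K))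
    (f : MvPolynomial (V × (Fin r → ℕ)) K) : Prop :=
  ∃ (n : ℕ) (q g : Fin n → MvPolynomial (V × (Fin r → ℕ)) K),
    (∀ i, g i ∈ G) ∧ f = ∑ i, q i * g i ∧
    ∀ i, q i ≠ 0 → g i ≠ 0 → oLE lo (lmo lo (q i) + lmo lo (g i)) (lmo lo f)

/-- The ideal `LM(S)` generated by the leading monomials of the nonzero elements
of `S`. -/
def lmIdeal {K V : Type*} [Field K] {r : ℕ} (lo : LinearOrder ((V × (Fin r → ℕ)) →₀ ℕ))
    (S : Set (MvPolynomial (V × (Fin r → ℕ)) K)) : Ideal (MvPolynomial (V × (Fin r → ℕ)) K) :=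
  Ideal.span ((fun g => (MvPolynomial.monomial (lmo lo g) (1 : K))) '' {g | g ∈ S ∧ g ≠ 0})

/-- `G ⊆ I` is a Gröbner basis of `I`: `LM(I)` is generated by `lm(G)`. -/
def IsGBasis {K V : Type*} [Field K] {r : ℕ} (lo : LinearOrder ((V × (Fin r → ℕ)) →₀ ℕ))
    (G : Set (MvPolynomial (V × (Fin r → ℕ)) K))
    (I : Ideal (MvPolynomial (V × (Fin r → ℕ)) K)) : Prop :=
  G ⊆ ↑I ∧ lmIdeal lo (I : Set (MvPolynomial (V × (Fin r → ℕ)) K)) = lmIdeal lo G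

/-- `G ⊆ I` is a Gröbner Σ-basis of `I`: `LM(I)` is generated by `Σ·lm(G)`. -/
def IsSigmaGBasis {K V : Type*} [Field K] {r : ℕ} (lo : LinearOrder ((V × (Fin r → ℕ)) →₀ ℕ))
    (G : Set (MvPolynomial (V × (Fin r → ℕ)) K))
    (I : Ideal (MvPolynomial (V × (Fin r → ℕ)) K)) : Prop :=
  G ⊆ ↑I ∧
  lmIdeal lo (I : Set (MvPolynomial (V × (Fin r → ℕ)) K)) =
    Ideal.span {p | ∃ (σ : Fin r → ℕ) (g : MvPolynomial (V × (Fin r → ℕ)) K),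
      g ∈ G ∧ g ≠ 0 ∧ p = MvPolynomial.monomial (shiftMon σ (lmo lo g)) (1 : K)}

/-- `I` is a Σ-ideal: it is invariant under all the shift endomorphisms. -/
def IsSigmaIdeal {K V : Type*} [CommSemiring K] {r : ℕ}
    (I : Ideal (MvPolynomial (V × (Fin r → ℕ)) K)) : Prop :=
  ∀ (σ : Fin r → ℕ) (p : MvPolynomial (V × (Fin r → ℕ)) K), p ∈ I → shiftPoly K σ p ∈ I

/-- The weight function `w : M → Σ̂ = Σ ∪ {0}` (here `Σ̂` is `WithBot (Fin r → ℕ)`,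
with `⊥` the extra element "0"):  `w(m)` is the `<`-maximum of the weights of the
variables occurring in `m`, where `<` is the given monomial ordering `loS` of `Σ`. -/
def wfun {V : Type*} {r : ℕ} (loS : LinearOrder (Fin r → ℕ))
    (m : (V × (Fin r → ℕ)) →₀ ℕ) : WithBot (Fin r → ℕ) :=
  @Finset.max _ loS (m.support.image (fun p => p.2))

/-- Addition in the idempotent semiring `Σ̂`: the maximum with respect to the
monomial ordering `loS` of `Σ`, with `⊥` as neutral element. -/
def hatAdd {r : ℕ} (loS : LinearOrder (Fin r → ℕ)) (a b : WithBot (Fin r → ℕ)) :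
    WithBot (Fin r → ℕ) :=
  @Max.max _ (@WithBot.linearOrder _ loS).toMax a b

/-- The order `≤` on `Σ̂` induced by the monomial ordering `loS` of `Σ`. -/
def hatLe {r : ℕ} (loS : LinearOrder (Fin r → ℕ)) (a b : WithBot (Fin r → ℕ)) : Prop :=
  @LE.le _ (@WithBot.linearOrder _ loS).toLE a b

/-- The strict order `<` on `Σ̂` induced by the monomial ordering `loS` of `Σ`. -/
def hatLt {r : ℕ} (loS : LinearOrder (Fin r → ℕ)) (a b : WithBot (Fin r → ℕ)) : Prop :=
  @LT.lt _ (@WithBot.linearOrder _ loS).toLT a b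

/-- The order function `ord : M → ℕ ∪ {−∞}`:  the maximum of `deg σ` over the
variables `x(σ)` occurring in `m` (and `−∞ = ⊥` for `m = 1`). -/
def ordFun {V : Type*} {r : ℕ} (m : (V × (Fin r → ℕ)) →₀ ℕ) : WithBot ℕ :=
  (m.support.image (fun p => degS p.2)).max

/-- A polynomial is `w`-homogeneous if all its monomials have the same weight. -/
def IsWHomog {K V : Type*} [CommSemiring K] {r : ℕ} (loS : LinearOrder (Fin r → ℕ))
    (f : MvPolynomial (V × (Fin r → ℕ)) K) : Prop :=
  ∀ m ∈ f.support, ∀ n ∈ f.support, wfun loS m = wfun loS n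

/-- A polynomial is `ord`-homogeneous if all its monomials have the same order. -/
def IsOrdHomog {K V : Type*} [CommSemiring K] {r : ℕ}
    (f : MvPolynomial (V × (Fin r → ℕ)) K) : Prop :=
  ∀ m ∈ f.support, ∀ n ∈ f.support, ordFun m = ordFun n

/-- The block `m(δ) ∈ M(δ) ≅ Mon(K[X])` of a monomial `m`, collecting the variables
of weight exactly `δ`. -/
def blockAt {X : Type*} {r : ℕ} (δ : Fin r → ℕ) (m : (X × (Fin r → ℕ)) →₀ ℕ) : X →₀ ℕ :=
  Finsupp.comapDomain (fun x => (x, δ)) m (fun _ _ _ _ h => congrArg Prod.fst h)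

/-- The weight Σ-ordering `≺_w` determined by a monomial ordering `ltS` of `Σ` and a
monomial ordering `lt1` of `P(1) = K[X(1)]` (transported to every block `P(δ)` via the
isomorphism `ρ(δ)`): compare the blocks of highest weight where the monomials differ. -/
def wlt {X : Type*} {r : ℕ} (ltS : (Fin r → ℕ) → (Fin r → ℕ) → Prop)
    (lt1 : (X →₀ ℕ) → (X →₀ ℕ) → Prop)
    (m n : (X × (Fin r → ℕ)) →₀ ℕ) : Prop :=
  ∃ δ : Fin r → ℕ, lt1 (blockAt δ m) (blockAt δ n) ∧
    ∀ ε : Fin r → ℕ, ltS δ ε → blockAt ε m = blockAt ε n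

/-- The block `m(x_j) ∈ M(x_j) ≅ Mon(K[x₀(Σ)])` of a monomial `m` (here `X = ℕ`),
collecting the variables of index exactly `j`. -/
def blockIdx {r : ℕ} (j : ℕ) (m : (ℕ × (Fin r → ℕ)) →₀ ℕ) : (Fin r → ℕ) →₀ ℕ :=
  Finsupp.comapDomain (fun σ => (j, σ)) m (fun _ _ _ _ h => congrArg Prod.snd h)

/-- The shift action of `σ ∈ Σ` on the monomials of `P(x₀) = K[x₀(Σ)]`. -/
def shiftMon0 {r : ℕ} (σ : Fin r → ℕ) (m : (Fin r → ℕ) →₀ ℕ) : (Fin r → ℕ) →₀ ℕ :=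
  Finsupp.mapDomain (fun τ => σ + τ) m

/-- The index Σ-ordering `≺_i` determined by a monomial Σ-ordering `lt0` of
`P(x₀) = K[x₀(Σ)]` (transported to every `P(x_j)` by the index shift): compare the
blocks of highest index where the monomials differ. -/
def ilt {r : ℕ} (lt0 : ((Fin r → ℕ) →₀ ℕ) → ((Fin r → ℕ) →₀ ℕ) → Prop)
    (m n : (ℕ × (Fin r → ℕ)) →₀ ℕ) : Prop :=
  ∃ j : ℕ, lt0 (blockIdx j m) (blockIdx j n) ∧ ∀ k : ℕ, j < k → blockIdx k m = blockIdx k n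

/- Homogenization setup:  `X̄ = X ∪ {t}` is modelled as `Option X`, with `none`
playing the role of the homogenizing variable `t` and `some x` that of `x ∈ X`;
thus `P̄ = K[X̄(Σ)] = MvPolynomial (Option X × (Fin r → ℕ)) K ⊇ P`. -/

/-- The inclusion `P = K[X(Σ)] ⊆ P̄ = K[X̄(Σ)]`. -/
def embP (K : Type*) [CommSemiring K] {X : Type*} {r : ℕ} :
    MvPolynomial (X × (Fin r → ℕ)) K →ₐ[K] MvPolynomial (Option X × (Fin r → ℕ)) K :=
  MvPolynomial.rename (fun p => (some p.1, p.2))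

/-- The inclusion `Mon(P) ⊆ Mon(P̄)` on monomials. -/
def embMon {X : Type*} {r : ℕ} (m : (X × (Fin r → ℕ)) →₀ ℕ) :
    (Option X × (Fin r → ℕ)) →₀ ℕ :=
  Finsupp.mapDomain (fun p => (some p.1, p.2)) m

/-- The dehomogenization Σ-endomorphism `φ : P̄ → P̄` with `x(σ) ↦ x(σ)`,
`t(σ) ↦ 1`. -/
def phiBar (K : Type*) [CommSemiring K] {X : Type*} {r : ℕ} :
    MvPolynomial (Option X × (Fin r → ℕ)) K →ₐ[K]
      MvPolynomial (Option X × (Fin r → ℕ)) K :=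
  MvPolynomial.aeval (fun p => p.1.elim 1 (fun x => MvPolynomial.X (some x, p.2)))

/-- The dehomogenization map `P̄ → P` with `x(σ) ↦ x(σ)`, `t(σ) ↦ 1`. -/
def dehom (K : Type*) [CommSemiring K] {X : Type*} {r : ℕ} :
    MvPolynomial (Option X × (Fin r → ℕ)) K →ₐ[K] MvPolynomial (X × (Fin r → ℕ)) K :=
  MvPolynomial.aeval (fun p => p.1.elim 1 (fun x => MvPolynomial.X (x, p.2)))

/-- `N`, the largest `ord`-graded Σ-ideal of `P̄` contained in `ker φ`: the ideal
generated by all `ord`-homogeneous elements of `ker φ`. -/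
def Nideal (K : Type*) [CommSemiring K] (X : Type*) (r : ℕ) :
    Ideal (MvPolynomial (Option X × (Fin r → ℕ)) K) :=
  Ideal.span {f | IsOrdHomog f ∧ phiBar K f = 0}

/-- The top order of a polynomial: the maximum of the orders of its monomials. -/
def topord {K V : Type*} [CommSemiring K] {r : ℕ}
    (f : MvPolynomial (V × (Fin r → ℕ)) K) : WithBot ℕ :=
  f.support.sup (fun m => ordFun m)

/-- The `ord`-homogenization `I*` of an ideal `I ⊆ P`: the ideal of `P̄` generated by
all `ord`-homogeneous elements of `φ⁻¹(I)`. -/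
def Istar {K : Type*} [Field K] {X : Type*} {r : ℕ}
    (I : Ideal (MvPolynomial (X × (Fin r → ℕ)) K)) :
    Ideal (MvPolynomial (Option X × (Fin r → ℕ)) K) :=
  Ideal.span {f | IsOrdHomog f ∧ dehom K f ∈ I}

/-- A monomial of `P̄` is `t`-free when it lies in `M = Mon(P)`. -/
def TFree {X : Type*} {r : ℕ} (m : (Option X × (Fin r → ℕ)) →₀ ℕ) : Prop :=
  ∀ p ∈ m.support, p.1 ≠ (none : Option X)

/-- A monomial of `P̄` is normal modulo `N` if it is of the form `m ∈ M`, or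
`t(σ)·n` with `n ∈ M`, `deg σ > ord n` and `t(σ)` the `≺`-least variable `t(τ)`
with `deg τ = deg σ`. -/
def NormalMon {X : Type*} {r : ℕ} (lo : LinearOrder ((Option X × (Fin r → ℕ)) →₀ ℕ))
    (m : (Option X × (Fin r → ℕ)) →₀ ℕ) : Prop :=
  TFree m ∨ ∃ (σ : Fin r → ℕ) (n : (Option X × (Fin r → ℕ)) →₀ ℕ),
    TFree n ∧ ordFun n < (degS σ : WithBot ℕ) ∧
    m = Finsupp.single ((none : Option X), σ) 1 + n ∧
    ∀ τ : Fin r → ℕ, degS τ = degS σ →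
      oLE lo (Finsupp.single ((none : Option X), σ) 1)
        (Finsupp.single ((none : Option X), τ) 1)

/-- `lo` is an `ord`-homogenization Σ-ordering of `P̄`: it is compatible with the
order function, and `t(σ)·m ≺ n` whenever `m, n ∈ M` and `deg σ = ord n > ord m`. -/
def IsHomogOrd {X : Type*} {r : ℕ}
    (lo : LinearOrder ((Option X × (Fin r → ℕ)) →₀ ℕ)) : Prop :=
  (∀ m n : (Option X × (Fin r → ℕ)) →₀ ℕ, ordFun m < ordFun n → oLT lo m n) ∧
  ∀ (m n : (Option X × (Fin r → ℕ)) →₀ ℕ) (σ : Fin r → ℕ),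
    TFree m → TFree n → (degS σ : WithBot ℕ) = ordFun n → ordFun m < ordFun n →
    oLT lo (Finsupp.single ((none : Option X), σ) 1 + m) n

end

/-! Every monomial is a finite product of variables, and by Higman's lemma the finite products
of a partially well-ordered set of elements `⪰ 1` are again partially well-ordered. For a total
order, partially well-ordered means well-ordered. -/

theorem Finsupp.addSubmonoidClosure_range_single_one {α : Type*} :
    AddSubmonoid.closure (Set.range fun a : α => Finsupp.single a (1 : ℕ)) = ⊤ := by
  rw [eq_top_iff, ← Finsupp.add_closure_setOfPred_eq_single, AddSubmonoid.closure_le]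
  rintro _ ⟨a, n, rfl⟩
  rw [← Finsupp.smul_single_one]
  exact AddSubmonoid.nsmul_mem _ (AddSubmonoid.subset_closure (Set.mem_range_self a)) n

theorem wellFoundedLT_of_addSubmonoidClosure_eq_top {M V : Type*} [AddCommMonoid M]
    [LinearOrder M] [IsOrderedCancelAddMonoid M] {g : V → M} (hpos : ∀ v, 0 ≤ g v)
    (hg : AddSubmonoid.closure (Set.range g) = ⊤) (hwf : WellFounded fun u v => g u < g v) :
    WellFoundedLT M := by
  have hgen : (Set.range g).IsPWO := Set.IsWF.isPWO (Set.wellFoundedOn_range.2 hwf)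
  have hsum := hgen.addSubmonoid_closure (by rintro _ ⟨v, rfl⟩; exact hpos v)
  rw [hg] at hsum
  exact Set.isWF_univ_iff.1 hsum.isWF

theorem statement_1_general {X : Type*} {r : ℕ}
    (lo : LinearOrder ((X × (Fin r → ℕ)) →₀ ℕ))
    (h1 : ∀ m : (X × (Fin r → ℕ)) →₀ ℕ, oLE lo 0 m)
    (h2 : ∀ m n t : (X × (Fin r → ℕ)) →₀ ℕ, oLT lo m n → oLT lo (t + m) (t + n)) :
    WellFounded (oLT lo) ↔
      WellFounded (fun u v : X × (Fin r → ℕ) =>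
        oLT lo (Finsupp.single u 1) (Finsupp.single v 1)) := by
  refine ⟨fun h => InvImage.wf _ h, fun hvar => ?_⟩
  -- `lo` is passed explicitly: `→₀ ℕ` already carries the pointwise order as an instance.
  have hcancel := @IsOrderedCancelAddMonoid.of_add_lt_add_left _ _ lo fun a b c h => h2 b c a h
  exact (@wellFoundedLT_of_addSubmonoidClosure_eq_top _ _ _ lo hcancel _ (fun _ => h1 _)
    Finsupp.addSubmonoidClosure_range_single_one hvar).wf

/-- A total ordering of the monomials of `P` with `1 ⪯ m` for all
`m` and compatible with multiplication is a well-ordering (i.e. a monomial ordering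
of `P`) if and only if its restriction to the set of variables `X(Σ)` is a
well-ordering. -/
theorem statement_1 {X : Type*} [Countable X] {r : ℕ}
    (lo : LinearOrder ((X × (Fin r → ℕ)) →₀ ℕ))
    (h1 : ∀ m : (X × (Fin r → ℕ)) →₀ ℕ, oLE lo 0 m)
    (h2 : ∀ m n t : (X × (Fin r → ℕ)) →₀ ℕ, oLT lo m n → oLT lo (t + m) (t + n)) :
    WellFounded (oLT lo) ↔
      WellFounded (fun u v : X × (Fin r → ℕ) =>
        oLT lo (Finsupp.single u 1) (Finsupp.single v 1)) :=
  statement_1_general lo h1 h2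
end

section
/- Let ≺ be a monomial Σ-ordering of P. Then m ⪯ σ·m for all monomials m ∈ M and all σ ∈ Σ. -/
/-- For a monomial Σ-ordering of `P` one has `m ⪯ σ·m` for every
monomial `m` and every `σ ∈ Σ`. -/
theorem statement_2 {X : Type*} {r : ℕ}
    (lo : LinearOrder ((X × (Fin r → ℕ)) →₀ ℕ)) (h : IsMonOrd lo)
    (hshift : ∀ (σ : Fin r → ℕ) (m n : (X × (Fin r → ℕ)) →₀ ℕ),
      oLT lo m n → oLT lo (shiftMon σ m) (shiftMon σ n))
    (m : (X × (Fin r → ℕ)) →₀ ℕ) (σ : Fin r → ℕ) :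
    oLE lo m (shiftMon σ m) := by
  -- `lo` is passed explicitly: `→₀ ℕ` also carries the pointwise order as an instance.
  have hmono : @StrictMono _ _ lo.toPreorder lo.toPreorder (shiftMon (V := X) σ) := hshift σ
  exact @StrictMono.le_apply _ lo ⟨h.wf⟩ _ hmono m
end

section
/- The weight Σ-ordering ≺_w of P is a monomial Σ-ordering of P. That is: fix a monomial ordering < of Σ and a monomial ordering ≺ of the subalgebra P(1) = K[X(1)], extended to each P(σ) = K[X(σ)] via the isomorphism m ↦ σ·m; writing each monomial m ∈ M uniquely as m = m(δ₁)⋯m(δ_k) with m(δ_i) ∈ M(δ_i) and δ₁ > … > δ_k, define m ≺_w n (for m = m(δ₁)⋯m(δ_k), n = n(δ₁)⋯n(δ_k)) if m(δ_j) = n(δ_j) for j < i and m(δ_i) ≺ n(δ_i) for some i. Then ≺_w is a monomial ordering of P satisfying: m ≺_w n implies σ·m ≺_w σ·n for all σ ∈ Σ. -/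
/-!
Currying a monomial into its family of blocks `δ ↦ m(δ)` is an additive bijection
`M ≃+ (Σ →₀ M(1))` under which `≺_w` becomes the colexicographic order (compare at the
`<`-largest weight where the blocks differ). Colex over a well-ordered index set with values in a
monomially ordered monoid is again a monomial ordering, and monomial orderings pull back along
injective additive maps. The shift by `σ` reindexes block families along `δ ↦ σδ`, which is
strictly monotone for `<`, and strictly monotone reindexing preserves colex.
-/

open Finsupp

theorem IsMonOrd.lift {M N : Type*} [AddCommMonoid M] [AddCommMonoid N] {lo : LinearOrder N}
    (h : IsMonOrd lo) (f : M →+ N) (hf : Function.Injective f) :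
    IsMonOrd (@LinearOrder.lift' M N lo f hf) where
  wf := InvImage.wf f h.wf
  zero_le a := by
    show oLE lo (f 0) (f a)
    rw [map_zero]
    exact h.zero_le _
  add_lt a b c hab := by
    show oLT lo (f (c + a)) (f (c + b))
    rw [map_add, map_add]
    exact h.add_lt _ _ _ hab

namespace Finsupp.Colex

variable {α N : Type*} [LinearOrder α] [AddCommMonoid N] [lo : LinearOrder N]

theorem isMonOrd [WellFoundedLT α] (h : IsMonOrd lo) :
    IsMonOrd (inferInstance : LinearOrder (Colex (α →₀ N))) := by
  have : IsBotZeroClass N := ⟨h.zero_le⟩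
  have : WellFoundedLT N := ⟨h.wf⟩
  have : AddLeftStrictMono N := ⟨fun c _ _ hab => h.add_lt _ _ c hab⟩
  exact ⟨wellFounded_lt, fun _ => bot_le, fun _ _ c hab => add_lt_add_right hab c⟩

theorem strictMono_mapDomain {β : Type*} [LinearOrder β] {f : α → β} (hf : StrictMono f) :
    StrictMono fun x : Colex (α →₀ N) => toColex (mapDomain f (ofColex x)) := by
  rintro x y ⟨i, hagree, hlt⟩
  refine ⟨f i, fun j hj => ?_, ?_⟩
  · by_cases hj' : j ∈ Set.range f
    · obtain ⟨k, rfl⟩ := hj'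
      simp only [ofColex_toColex, mapDomain_apply hf.injective]
      exact hagree k (hf.lt_iff_lt.mp hj)
    · simp only [ofColex_toColex, mapDomain_of_notMem_range _ _ hj']
  · simpa only [ofColex_toColex, mapDomain_apply hf.injective] using hlt

end Finsupp.Colex

section WeightOrder

/- `Fin r → ℕ` and `X →₀ ℕ` carry the pointwise orders as instances, so the orders `loS`, `lo1`
are always passed explicitly. -/

variable {X : Type*} {r : ℕ}

noncomputable def blocks : ((X × (Fin r → ℕ)) →₀ ℕ) ≃+ ((Fin r → ℕ) →₀ X →₀ ℕ) :=
  (Finsupp.domCongr (Equiv.prodComm X (Fin r → ℕ))).trans curryAddEquiv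

theorem blocks_apply (m : (X × (Fin r → ℕ)) →₀ ℕ) (δ : Fin r → ℕ) :
    blocks m δ = blockAt δ m := by
  ext x
  rw [show blockAt δ m x = m (x, δ) from rfl]
  simp [blocks]

theorem blocks_shiftMon (σ : Fin r → ℕ) (m : (X × (Fin r → ℕ)) →₀ ℕ) :
    blocks (shiftMon σ m) = mapDomain (σ + ·) (blocks m) := by
  induction m using Finsupp.induction_linear with
  | zero => simp [shiftMon]
  | add m n hm hn => simp_all [shiftMon, mapDomain_add]
  | single p a => simp [shiftMon, blocks]

noncomputable abbrev weightOrder (loS : LinearOrder (Fin r → ℕ)) (lo1 : LinearOrder (X →₀ ℕ)) :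
    LinearOrder ((X × (Fin r → ℕ)) →₀ ℕ) :=
  @LinearOrder.lift' _ _ (@Colex.linearOrder _ _ _ loS lo1) (fun m => toColex (blocks m))
    blocks.injective

theorem wlt_eq_oLT_weightOrder (loS : LinearOrder (Fin r → ℕ)) (lo1 : LinearOrder (X →₀ ℕ)) :
    wlt (oLT loS) (oLT lo1) = oLT (weightOrder loS lo1) := by
  ext m n
  exact exists_congr fun δ => by simp only [← blocks_apply]; exact and_comm

theorem isMonOrd_weightOrder {loS : LinearOrder (Fin r → ℕ)} {lo1 : LinearOrder (X →₀ ℕ)}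
    (hS : WellFounded (oLT loS)) (h1 : IsMonOrd lo1) : IsMonOrd (weightOrder loS lo1) :=
  IsMonOrd.lift (@Colex.isMonOrd _ _ loS _ lo1 ⟨hS⟩ h1)
    (blocks.toAddMonoidHom : _ →+ Colex ((Fin r → ℕ) →₀ X →₀ ℕ)) blocks.injective

theorem weightOrder_shiftMon {loS : LinearOrder (Fin r → ℕ)} (hS : IsMonOrd loS)
    (lo1 : LinearOrder (X →₀ ℕ)) (σ : Fin r → ℕ) {m n : (X × (Fin r → ℕ)) →₀ ℕ}
    (h : oLT (weightOrder loS lo1) m n) :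
    oLT (weightOrder loS lo1) (shiftMon σ m) (shiftMon σ n) := by
  show oLT (@Colex.linearOrder _ _ _ loS lo1) (toColex (blocks _)) (toColex (blocks _))
  rw [blocks_shiftMon, blocks_shiftMon]
  exact @Colex.strictMono_mapDomain _ _ loS _ lo1 _ loS _ (fun _ _ => hS.add_lt _ _ σ) _ _ h

end WeightOrder

theorem statement_3_general {X : Type*} {r : ℕ}
    (loS : LinearOrder (Fin r → ℕ)) (hS : IsMonOrd loS)
    (lo1 : LinearOrder (X →₀ ℕ)) (h1 : IsMonOrd lo1) :
    (∀ m n : (X × (Fin r → ℕ)) →₀ ℕ,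
        wlt (oLT loS) (oLT lo1) m n ∨ m = n ∨ wlt (oLT loS) (oLT lo1) n m) ∧
    (∀ m : (X × (Fin r → ℕ)) →₀ ℕ, ¬ wlt (oLT loS) (oLT lo1) m m) ∧
    (∀ a b c : (X × (Fin r → ℕ)) →₀ ℕ, wlt (oLT loS) (oLT lo1) a b →
        wlt (oLT loS) (oLT lo1) b c → wlt (oLT loS) (oLT lo1) a c) ∧
    WellFounded (wlt (oLT loS) (oLT lo1)) ∧
    (∀ m : (X × (Fin r → ℕ)) →₀ ℕ, ¬ wlt (oLT loS) (oLT lo1) m 0) ∧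
    (∀ m n t : (X × (Fin r → ℕ)) →₀ ℕ,
        wlt (oLT loS) (oLT lo1) m n → wlt (oLT loS) (oLT lo1) (t + m) (t + n)) ∧
    (∀ (σ : Fin r → ℕ) (m n : (X × (Fin r → ℕ)) →₀ ℕ),
        wlt (oLT loS) (oLT lo1) m n →
          wlt (oLT loS) (oLT lo1) (shiftMon σ m) (shiftMon σ n)) := by
  rw [wlt_eq_oLT_weightOrder]
  set lo := weightOrder loS lo1
  have hmon : IsMonOrd lo := isMonOrd_weightOrder hS.wf h1
  exact ⟨@lt_trichotomy _ lo, @lt_irrefl _ lo.toPreorder,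
    fun _ _ _ => @lt_trans _ lo.toPreorder _ _ _, hmon.wf,
    fun m => @not_lt_of_ge _ lo.toPreorder _ _ (hmon.zero_le m),
    fun m n t => hmon.add_lt m n t, fun σ _ _ => weightOrder_shiftMon hS lo1 σ⟩

/-- The weight Σ-ordering `≺_w` of `P`, defined from a monomial
ordering of `Σ` and a monomial ordering of `P(1)` (extended to the blocks `P(σ)` by
the isomorphisms `ρ(σ)`), is a monomial Σ-ordering of `P`: a strict total
well-founded order with `1` minimal, compatible with multiplication and with the
Σ-action. -/
theorem statement_3 {X : Type*} [Countable X] {r : ℕ}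
    (loS : LinearOrder (Fin r → ℕ)) (hS : IsMonOrd loS)
    (lo1 : LinearOrder (X →₀ ℕ)) (h1 : IsMonOrd lo1) :
    (∀ m n : (X × (Fin r → ℕ)) →₀ ℕ,
        wlt (oLT loS) (oLT lo1) m n ∨ m = n ∨ wlt (oLT loS) (oLT lo1) n m) ∧
    (∀ m : (X × (Fin r → ℕ)) →₀ ℕ, ¬ wlt (oLT loS) (oLT lo1) m m) ∧
    (∀ a b c : (X × (Fin r → ℕ)) →₀ ℕ, wlt (oLT loS) (oLT lo1) a b →
        wlt (oLT loS) (oLT lo1) b c → wlt (oLT loS) (oLT lo1) a c) ∧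
    WellFounded (wlt (oLT loS) (oLT lo1)) ∧
    (∀ m : (X × (Fin r → ℕ)) →₀ ℕ, ¬ wlt (oLT loS) (oLT lo1) m 0) ∧
    (∀ m n t : (X × (Fin r → ℕ)) →₀ ℕ,
        wlt (oLT loS) (oLT lo1) m n → wlt (oLT loS) (oLT lo1) (t + m) (t + n)) ∧
    (∀ (σ : Fin r → ℕ) (m n : (X × (Fin r → ℕ)) →₀ ℕ),
        wlt (oLT loS) (oLT lo1) m n →
          wlt (oLT loS) (oLT lo1) (shiftMon σ m) (shiftMon σ n)) :=
  statement_3_general loS hS lo1 h1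
end

section
/- Let P be endowed with a monomial Σ-ordering. For all nonzero f, g ∈ P and every σ ∈ Σ one has σ·spoly(f, g) = spoly(σ·f, σ·g). -/
open Function Finsupp MvPolynomial

lemma Finsupp.mapDomain_zipWith {α β M N P : Type*} [AddCommMonoid M] [AddCommMonoid N]
    [AddCommMonoid P] {f : α → β} (hf : Injective f) (g : M → N → P) (hg : g 0 0 = 0)
    (m : α →₀ M) (n : α →₀ N) :
    (zipWith g hg m n).mapDomain f = zipWith g hg (m.mapDomain f) (n.mapDomain f) := by
  ext b
  by_cases hb : b ∈ Set.range f
  · obtain ⟨a, rfl⟩ := hb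
    simp only [zipWith_apply, mapDomain_apply hf]
  · simp only [zipWith_apply, mapDomain_of_notMem_range _ _ hb, hg]

section Rename

variable {K V : Type*} {r : ℕ} (lo : LinearOrder ((V × (Fin r → ℕ)) →₀ ℕ))
  {φ : V × (Fin r → ℕ) → V × (Fin r → ℕ)}

lemma mapDomain_lcmMon (hφ : Injective φ) (m n : (V × (Fin r → ℕ)) →₀ ℕ) :
    (lcmMon m n).mapDomain φ = lcmMon (m.mapDomain φ) (n.mapDomain φ) :=
  mapDomain_zipWith hφ _ _ m n

-- This holds also for `f = 0`, where both sides are the junk value `0`.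
lemma lmo_rename [CommSemiring K] (hφ : Injective φ)
    (hφ_lt : ∀ m n, oLT lo m n → oLT lo (m.mapDomain φ) (n.mapDomain φ))
    (f : MvPolynomial (V × (Fin r → ℕ)) K) :
    lmo lo (rename φ f) = (lmo lo f).mapDomain φ := by
  classical
  by_cases hf : f = 0
  · simp [hf, lmo]
  have hne : rename φ f ≠ 0 := fun h0 => hf (rename_injective φ hφ (by rwa [map_zero]))
  have hmono : @Monotone _ _ lo.toPreorder lo.toPreorder (mapDomain φ) :=
    @StrictMono.monotone _ _ lo.toPartialOrder lo.toPreorder _ hφ_lt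
  unfold lmo
  rw [dif_neg hne, dif_neg hf]
  simp only [support_rename_of_injective hφ]
  convert @Finset.max'_image _ _ lo lo _ hmono f.support ?_
  simpa [Finset.nonempty_iff_ne_empty] using hf

lemma lco_rename [CommSemiring K] (hφ : Injective φ)
    (hφ_lt : ∀ m n, oLT lo m n → oLT lo (m.mapDomain φ) (n.mapDomain φ))
    (f : MvPolynomial (V × (Fin r → ℕ)) K) :
    lco lo (rename φ f) = lco lo f := by
  rw [lco, lmo_rename lo hφ hφ_lt, coeff_rename_mapDomain φ hφ, lco]

lemma spoly_rename [Field K] (hφ : Injective φ)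
    (hφ_lt : ∀ m n, oLT lo m n → oLT lo (m.mapDomain φ) (n.mapDomain φ))
    (f g : MvPolynomial (V × (Fin r → ℕ)) K) :
    spoly lo (rename φ f) (rename φ g) = rename φ (spoly lo f g) := by
  simp only [spoly, lmo_rename lo hφ hφ_lt, lco_rename lo hφ hφ_lt, ← mapDomain_lcmMon hφ,
    ← mapDomain_tsub hφ, map_sub, map_mul, rename_monomial]

end Rename

lemma shift_injective {V : Type*} {r : ℕ} (σ : Fin r → ℕ) :
    Injective (fun p : V × (Fin r → ℕ) => (p.1, σ + p.2)) :=
  fun _ _ h => Prod.ext (Prod.ext_iff.1 h).1 (add_left_cancel (Prod.ext_iff.1 h).2)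

theorem statement_6_general {K : Type*} [Field K] {X : Type*} {r : ℕ}
    (lo : LinearOrder ((X × (Fin r → ℕ)) →₀ ℕ))
    (hshift : ∀ (σ : Fin r → ℕ) (m n : (X × (Fin r → ℕ)) →₀ ℕ),
      oLT lo m n → oLT lo (shiftMon σ m) (shiftMon σ n))
    (f g : MvPolynomial (X × (Fin r → ℕ)) K)
    (σ : Fin r → ℕ) :
    shiftPoly K σ (spoly lo f g) = spoly lo (shiftPoly K σ f) (shiftPoly K σ g) :=
  (spoly_rename lo (shift_injective σ) (hshift σ) f g).symm

/-- For a monomial Σ-ordering of `P`, all nonzero `f, g ∈ P` and all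
`σ ∈ Σ`: `σ·spoly(f,g) = spoly(σ·f, σ·g)`. -/
theorem statement_6 {K : Type*} [Field K] {X : Type*} {r : ℕ}
    (lo : LinearOrder ((X × (Fin r → ℕ)) →₀ ℕ)) (h : IsMonOrd lo)
    (hshift : ∀ (σ : Fin r → ℕ) (m n : (X × (Fin r → ℕ)) →₀ ℕ),
      oLT lo m n → oLT lo (shiftMon σ m) (shiftMon σ n))
    (f g : MvPolynomial (X × (Fin r → ℕ)) K) (hf : f ≠ 0) (hg : g ≠ 0)
    (σ : Fin r → ℕ) :
    shiftPoly K σ (spoly lo f g) = spoly lo (shiftPoly K σ f) (shiftPoly K σ g) :=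
  statement_6_general lo hshift f g σ
end

section
/- Buchberger's criterion in the polynomial ring P with (possibly countably infinitely many) variables: let P be endowed with a monomial ordering ≺ and let G be a (possibly infinite) generating set of an ideal I ⊆ P. Then G is a Gröbner basis of I (i.e., LM(I) is generated by lm(G)) if and only if for all nonzero f, g ∈ G the S-polynomial spoly(f, g) has a Gröbner representation with respect to G. -/
/-! A Gröbner representation of `f` is a combination `∑ cᵢ xᵃⁱ gᵢ` with `gᵢ ∈ G` whose summands
all have formal degree `aᵢ + lm gᵢ ⪯ lm f`. If `G` is a Gröbner basis, dividing an element of `I`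
by `G` leaves remainder `0`, which is such a representation. Conversely, write `f ∈ I` as a
combination of minimal bound `δ`. If `δ ≻ lm f`, the summands of formal degree `δ` cancel at `δ`,
so their sum is a combination of their S-polynomials; each of these is a monomial multiple of
some `spoly(g, g')`, and substituting the Gröbner representation of `spoly(g, g')` gives a
combination bounded strictly below `δ`. Hence `δ = lm f`, so `lm f` is a multiple of some
`lm g`. -/

namespace IsMonOrd

variable {σ : Type*} {lo : LinearOrder (σ →₀ ℕ)}

theorem add_le_add_left (h : IsMonOrd lo) {a b : σ →₀ ℕ} (hab : oLE lo a b) (c : σ →₀ ℕ) :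
    oLE lo (c + a) (c + b) := by
  by_cases hba : oLE lo b a
  · rw [lo.le_antisymm a b hab hba]
    exact lo.le_refl _
  · exact ((lo.lt_iff_le_not_ge _ _).1
      (h.add_lt a b c ((lo.lt_iff_le_not_ge a b).2 ⟨hab, hba⟩))).1

noncomputable def toMonomialOrder (h : IsMonOrd lo) : MonomialOrder σ where
  syn := σ →₀ ℕ
  linearOrderSyn := lo
  isOrderedAddMonoid_syn :=
    @IsOrderedAddMonoid.mk _ _ lo.toPreorder
      (fun a b hab c => by rw [add_comm a c, add_comm b c]; exact h.add_le_add_left hab c)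
      (fun a b hab c => h.add_le_add_left hab c)
  toSyn := AddEquiv.refl _
  toSyn_monotone := fun a b hab => by
    obtain ⟨c, rfl⟩ := exists_add_of_le hab
    have := h.add_le_add_left (h.zero_le c) a
    rwa [add_zero] at this
  wellFoundedLT_syn := ⟨h.wf⟩

theorem toSyn_le_iff (h : IsMonOrd lo) {a b : σ →₀ ℕ} :
    h.toMonomialOrder.toSyn a ≤ h.toMonomialOrder.toSyn b ↔ oLE lo a b := Iff.rfl

end IsMonOrd

theorem MvPolynomial.smul_monomial_one_mul {σ R : Type*} [CommSemiring R] (c : R) (a : σ →₀ ℕ)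
    (g : MvPolynomial σ R) : c • (monomial a 1 * g) = monomial a c * g := by
  rw [← smul_mul_assoc, smul_monomial, smul_eq_mul, mul_one]

namespace MonomialOrder

open MvPolynomial Set

variable {σ K : Type*} [Field K] (m : MonomialOrder σ)

/-- `f ∈ m.boundedSpan G (Iic (m.toSyn (m.degree f)))` says that `f` has a Gröbner
representation with respect to `G`. -/
noncomputable def boundedSpan (G : Set (MvPolynomial σ K)) (s : Set m.syn) :
    Submodule K (MvPolynomial σ K) :=
  Submodule.span K {p | ∃ g ∈ G, ∃ a, m.toSyn (a + m.degree g) ∈ s ∧ p = monomial a 1 * g}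

variable {m} {G : Set (MvPolynomial σ K)} {s t : Set m.syn} {f : MvPolynomial σ K}

theorem boundedSpan_mono (hst : s ⊆ t) : m.boundedSpan G s ≤ m.boundedSpan G t :=
  Submodule.span_mono fun _ ⟨g, hg, a, ha, hp⟩ => ⟨g, hg, a, hst ha, hp⟩

theorem boundedSpan_union :
    m.boundedSpan G (s ∪ t) = m.boundedSpan G s ⊔ m.boundedSpan G t := by
  rw [boundedSpan, boundedSpan, boundedSpan, ← Submodule.span_union]
  congr 1
  ext p
  simp only [mem_union]
  grind

theorem monomial_mul_mem_boundedSpan {a : σ →₀ ℕ} (c : K) (hst : ∀ x ∈ s, m.toSyn a + x ∈ t)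
    (hf : f ∈ m.boundedSpan G s) : monomial a c * f ∈ m.boundedSpan G t := by
  induction hf using Submodule.span_induction with
  | mem p hp =>
    obtain ⟨g, hg, b, hb, rfl⟩ := hp
    rw [← mul_assoc, monomial_mul, mul_one, ← smul_monomial_one_mul]
    refine Submodule.smul_mem _ _ (Submodule.subset_span ⟨g, hg, a + b, ?_, rfl⟩)
    simpa only [add_assoc, map_add] using hst _ hb
  | zero => simp
  | add p q _ _ hp hq => rw [mul_add]; exact Submodule.add_mem _ hp hq
  | smul c' p _ hp => rw [mul_smul_comm]; exact Submodule.smul_mem _ _ hp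

theorem mul_mem_boundedSpan_Iic (q : MvPolynomial σ K) {ε : m.syn}
    (hf : f ∈ m.boundedSpan G (Iic ε)) :
    q * f ∈ m.boundedSpan G (Iic (m.toSyn (m.degree q) + ε)) := by
  rw [show q * f = ∑ a ∈ q.support, monomial a (coeff a q) * f by
    rw [← Finset.sum_mul, ← q.as_sum]]
  exact Submodule.sum_mem _ fun a ha => monomial_mul_mem_boundedSpan _
    (fun x hx => add_le_add (m.le_degree ha) hx) hf

theorem mem_boundedSpan_Iic_degree {g : MvPolynomial σ K} (hg : g ∈ G) :
    g ∈ m.boundedSpan G (Iic (m.toSyn (m.degree g))) :=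
  Submodule.subset_span ⟨g, hg, 0, by simp, by simp⟩

theorem eq_zero_or_exists_mem_boundedSpan_Iic (hf : f ∈ m.boundedSpan G s) :
    f = 0 ∨ ∃ ε ∈ s, f ∈ m.boundedSpan G (Iic ε) := by
  induction hf using Submodule.span_induction with
  | mem p hp =>
    obtain ⟨g, hg, a, ha, rfl⟩ := hp
    exact .inr ⟨_, ha, Submodule.subset_span ⟨g, hg, a, le_rfl, rfl⟩⟩
  | zero => exact .inl rfl
  | add p q _ _ hp hq =>
    rcases hp with rfl | ⟨ε, hε, hp⟩
    · simpa using hq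
    rcases hq with rfl | ⟨ε', hε', hq⟩
    · simpa using Or.inr ⟨ε, hε, hp⟩
    refine .inr ⟨max ε ε', max_rec' s hε hε', Submodule.add_mem _ ?_ ?_⟩
    · exact boundedSpan_mono (Iic_subset_Iic.2 (le_max_left _ _)) hp
    · exact boundedSpan_mono (Iic_subset_Iic.2 (le_max_right _ _)) hq
  | smul c p _ hp =>
    rcases hp with rfl | ⟨ε, hε, hp⟩
    · simp
    · exact .inr ⟨ε, hε, Submodule.smul_mem _ _ hp⟩

theorem degree_le_of_mem_boundedSpan_Iic {δ : m.syn} (hf : f ∈ m.boundedSpan G (Iic δ)) :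
    m.toSyn (m.degree f) ≤ δ := by
  induction hf using Submodule.span_induction with
  | mem p hp =>
    obtain ⟨g, hg, a, ha, rfl⟩ := hp
    calc m.toSyn (m.degree (monomial a 1 * g))
        ≤ m.toSyn (m.degree (monomial a (1 : K)) + m.degree g) := m.degree_mul_le
      _ ≤ m.toSyn (a + m.degree g) := by
        rw [map_add, map_add]; gcongr; exact m.degree_monomial_le 1
      _ ≤ δ := ha
  | zero => simp
  | add p q _ _ hp hq => exact m.degree_add_le.trans (sup_le hp hq)
  | smul c p _ hp => exact m.degree_smul_le.trans hp

theorem degree_lt_of_mem_boundedSpan_Iio {δ : m.syn} (hf : f ∈ m.boundedSpan G (Iio δ))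
    (hf0 : f ≠ 0) : m.toSyn (m.degree f) < δ := by
  obtain ⟨ε, hε, hfε⟩ := (eq_zero_or_exists_mem_boundedSpan_Iic hf).resolve_left hf0
  exact (degree_le_of_mem_boundedSpan_Iic hfε).trans_lt hε

theorem exists_degree_le_of_mem_boundedSpan_Iic_degree
    (hf : f ∈ m.boundedSpan G (Iic (m.toSyn (m.degree f)))) (hf0 : f ≠ 0) :
    ∃ g ∈ G, g ≠ 0 ∧ m.degree g ≤ m.degree f := by
  by_contra! hno
  have hle : m.boundedSpan G (Iic (m.toSyn (m.degree f))) ≤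
      m.boundedSpan G (Iio (m.toSyn (m.degree f))) := by
    refine Submodule.span_le.2 ?_
    rintro _ ⟨g, hg, a, ha, rfl⟩
    rcases (mem_Iic.1 ha).lt_or_eq with hlt | heq
    · exact Submodule.subset_span ⟨g, hg, a, hlt, rfl⟩
    · obtain rfl : g = 0 := by
        by_contra hg0
        exact hno g hg hg0 (m.toSyn.injective heq ▸ le_add_self)
      simp
  exact (degree_lt_of_mem_boundedSpan_Iio (hle hf) hf0).false

theorem mem_boundedSpan_univ_of_mem_span (hf : f ∈ Ideal.span G) :
    f ∈ m.boundedSpan G univ := by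
  induction hf using Submodule.span_induction with
  | mem g hg => exact boundedSpan_mono (subset_univ _) (mem_boundedSpan_Iic_degree hg)
  | zero => exact Submodule.zero_mem _
  | add p q _ _ hp hq => exact Submodule.add_mem _ hp hq
  | smul q p _ hp =>
    obtain rfl | ⟨ε, -, hp⟩ := eq_zero_or_exists_mem_boundedSpan_Iic hp
    · simp
    · exact boundedSpan_mono (subset_univ _) (mul_mem_boundedSpan_Iic q hp)

theorem mem_boundedSpan_Iic_degree_of_mem {I : Ideal (MvPolynomial σ K)} (hGI : G ⊆ I)
    (hLM : ∀ f ∈ I, f ≠ 0 → ∃ g ∈ G, g ≠ 0 ∧ m.degree g ≤ m.degree f) (hf : f ∈ I) :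
    f ∈ m.boundedSpan G (Iic (m.toSyn (m.degree f))) := by
  obtain ⟨q, r, hfqr, hdeg, hr⟩ :=
    m.div_set (B := {g | g ∈ G ∧ g ≠ 0}) (fun b hb => m.isUnit_leadingCoeff.2 hb.2) f
  have hp : Finsupp.linearCombination _ (fun b : {g | g ∈ G ∧ g ≠ 0} => (b : MvPolynomial σ K)) q
      ∈ m.boundedSpan G (Iic (m.toSyn (m.degree f))) := by
    rw [Finsupp.linearCombination_apply, Finsupp.sum]
    refine Submodule.sum_mem _ fun b _ => ?_
    rcases eq_or_ne (q b) 0 with hq0 | hq0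
    · simp [hq0]
    refine boundedSpan_mono (Iic_subset_Iic.2 ?_)
      (mul_mem_boundedSpan_Iic (q b) (mem_boundedSpan_Iic_degree b.2.1))
    rw [← map_add, add_comm, ← m.degree_mul b.2.2 hq0]
    exact hdeg b
  obtain rfl : r = 0 := by
    by_contra hr0
    have hrI : r ∈ I := by
      rw [eq_sub_of_add_eq' hfqr.symm, Finsupp.linearCombination_apply, Finsupp.sum]
      exact I.sub_mem hf (I.sum_mem fun b _ => I.mul_mem_left _ (hGI b.2.1))
    obtain ⟨g, hg, hg0, hle⟩ := hLM r hrI hr0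
    exact hr _ (m.degree_mem_support hr0) g ⟨hg, hg0⟩ hle
  rw [add_zero] at hfqr
  convert hp using 1

section StandardSPolynomials

variable (hS : ∀ f ∈ G, ∀ g ∈ G,
  m.sPolynomial f g ∈ m.boundedSpan G (Iic (m.toSyn (m.degree (m.sPolynomial f g)))))
include hS

theorem sPolynomial_monomial_mul_mem_boundedSpan_Iio {g₁ g₂ : MvPolynomial σ K} (hg₁ : g₁ ∈ G)
    (hg₂ : g₂ ∈ G) {a₁ a₂ : σ →₀ ℕ} {δ : m.syn} (h₁ : m.toSyn (a₁ + m.degree g₁) = δ)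
    (h₂ : m.toSyn (a₂ + m.degree g₂) = δ) (c₁ c₂ : K) :
    m.sPolynomial (monomial a₁ c₁ * g₁) (monomial a₂ c₂ * g₂) ∈ m.boundedSpan G (Iio δ) := by
  set d := a₁ + m.degree g₁
  have hd : a₂ + m.degree g₂ = d := m.toSyn.injective (h₂.trans h₁.symm)
  have hL : m.degree g₁ ⊔ m.degree g₂ ≤ d := sup_le le_add_self (hd ▸ le_add_self)
  rw [m.sPolynomial_monomial_mul, hd, sup_idem]
  by_cases hS0 : m.sPolynomial g₁ g₂ = 0
  · simp [hS0]
  refine monomial_mul_mem_boundedSpan _ (fun x hx => ?_) (hS g₁ hg₁ g₂ hg₂)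
  calc m.toSyn (d - m.degree g₁ ⊔ m.degree g₂) + x
      ≤ m.toSyn (d - m.degree g₁ ⊔ m.degree g₂) + m.toSyn (m.degree (m.sPolynomial g₁ g₂)) := by
        gcongr; exact hx
    _ < m.toSyn (d - m.degree g₁ ⊔ m.degree g₂) + m.toSyn (m.degree g₁ ⊔ m.degree g₂) := by
        gcongr; exact m.degree_sPolynomial_lt_sup_degree hS0
    _ = δ := by rw [← map_add, tsub_add_cancel_of_le hL, h₁]

theorem mem_boundedSpan_Iio_of_mem_singleton {δ : m.syn} (hf : f ∈ m.boundedSpan G {δ})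
    (hlt : m.toSyn (m.degree f) < δ) : f ∈ m.boundedSpan G (Iio δ) := by
  classical
  obtain ⟨n, c, v, rfl⟩ := Submodule.mem_span_set'.1 hf
  choose g hg a ha hv using fun i => (v i).2
  simp_rw [hv, smul_monomial_one_mul] at hlt ⊢
  have hdeg : ∀ i ∈ Finset.univ,
      m.toSyn (m.degree (monomial (a i) (c i) * g i)) = δ ∨ monomial (a i) (c i) * g i = 0 := by
    intro i _
    by_cases h0 : c i = 0 ∨ g i = 0
    · right; rcases h0 with h0 | h0 <;> simp [h0]
    push Not at h0
    left
    rw [m.degree_mul (by simpa using h0.1) h0.2, m.degree_monomial, if_neg h0.1]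
    exact ha i
  obtain ⟨c', hc'⟩ := m.sPolynomial_decomposition' _ hdeg hlt
  rw [hc']
  exact Submodule.sum_mem _ fun i _ => Submodule.sum_mem _ fun j _ => Submodule.smul_mem _ _
    (sPolynomial_monomial_mul_mem_boundedSpan_Iio hS (hg i) (hg j) (ha i) (ha j) _ _)

theorem mem_boundedSpan_Iio_of_degree_lt {δ : m.syn} (hf : f ∈ m.boundedSpan G (Iic δ))
    (hlt : m.toSyn (m.degree f) < δ) : f ∈ m.boundedSpan G (Iio δ) := by
  rw [← Iio_union_right, boundedSpan_union] at hf
  obtain ⟨x, hx, y, hy, rfl⟩ := Submodule.mem_sup.1 hf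
  have hxδ : m.toSyn (m.degree x) < δ := by
    rcases eq_or_ne x 0 with rfl | hx0
    · simpa using (m.zero_le _).trans_lt hlt
    · exact degree_lt_of_mem_boundedSpan_Iio hx hx0
  have hyδ : m.toSyn (m.degree y) < δ := by
    have := m.degree_sub_le (f := x + y) (g := x)
    rw [add_sub_cancel_left] at this
    exact this.trans_lt (max_lt hlt hxδ)
  exact Submodule.add_mem _ hx (mem_boundedSpan_Iio_of_mem_singleton hS hy hyδ)

theorem exists_degree_le_of_mem_span (hf : f ∈ Ideal.span G) (hf0 : f ≠ 0) :
    ∃ g ∈ G, g ≠ 0 ∧ m.degree g ≤ m.degree f := by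
  obtain ⟨δ, -, hδ⟩ :=
    (eq_zero_or_exists_mem_boundedSpan_Iic (mem_boundedSpan_univ_of_mem_span hf)).resolve_left hf0
  induction δ using WellFoundedLT.induction with
  | _ δ ih =>
    rcases (degree_le_of_mem_boundedSpan_Iic hδ).lt_or_eq with hlt | heq
    · obtain ⟨ε, hε, hfε⟩ := (eq_zero_or_exists_mem_boundedSpan_Iic
        (mem_boundedSpan_Iio_of_degree_lt hS hδ hlt)).resolve_left hf0
      exact ih ε hε hfε
    · exact exists_degree_le_of_mem_boundedSpan_Iic_degree (heq ▸ hδ) hf0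

end StandardSPolynomials

end MonomialOrder

section Translation

open MvPolynomial Set MonomialOrder

variable {K V : Type*} [Field K] {r : ℕ} {lo : LinearOrder ((V × (Fin r → ℕ)) →₀ ℕ)}
  {G : Set (MvPolynomial (V × (Fin r → ℕ)) K)}

theorem lcmMon_eq_sup (a b : (V × (Fin r → ℕ)) →₀ ℕ) : lcmMon a b = a ⊔ b := by
  ext; simp [lcmMon]

theorem monomial_mem_lmIdeal_iff {S : Set (MvPolynomial (V × (Fin r → ℕ)) K)}
    {a : (V × (Fin r → ℕ)) →₀ ℕ} :
    monomial a (1 : K) ∈ lmIdeal lo S ↔ ∃ g ∈ S, g ≠ 0 ∧ lmo lo g ≤ a := by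
  classical
  rw [lmIdeal, ← image_image (fun s => monomial s (1 : K)), mem_ideal_span_monomial_image,
    support_monomial, if_neg one_ne_zero]
  simp [and_assoc]

theorem isGBasis_iff {I : Ideal (MvPolynomial (V × (Fin r → ℕ)) K)} (hGI : G ⊆ I) :
    IsGBasis lo G I ↔ ∀ f ∈ I, f ≠ 0 → ∃ g ∈ G, g ≠ 0 ∧ lmo lo g ≤ lmo lo f := by
  have hGI' : lmIdeal lo G ≤ lmIdeal lo I :=
    Ideal.span_mono (image_mono fun g hg => ⟨hGI hg.1, hg.2⟩)
  rw [IsGBasis, and_iff_right hGI, le_antisymm_iff, and_iff_left hGI', lmIdeal, Ideal.span_le,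
    image_subset_iff]
  simp only [subset_def, mem_preimage, SetLike.mem_coe, monomial_mem_lmIdeal_iff]
  simp [and_imp]

theorem spoly_mem {I : Ideal (MvPolynomial (V × (Fin r → ℕ)) K)}
    {f g : MvPolynomial (V × (Fin r → ℕ)) K} (hf : f ∈ I) (hg : g ∈ I) : spoly lo f g ∈ I :=
  I.sub_mem (I.mul_mem_left _ hf) (I.mul_mem_left _ hg)

variable (h : IsMonOrd lo)
include h

theorem lmo_eq_degree (f : MvPolynomial (V × (Fin r → ℕ)) K) :
    lmo lo f = h.toMonomialOrder.degree f := by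
  rcases eq_or_ne f 0 with rfl | hf
  · rw [MonomialOrder.degree_zero]
    exact dif_pos rfl
  rw [lmo, dif_neg hf]
  have hdeg := h.toMonomialOrder.degree_mem_support hf
  exact lo.le_antisymm _ _ (h.toMonomialOrder.le_degree (@Finset.max'_mem _ lo _ ⟨_, hdeg⟩))
    (@Finset.le_max' _ lo _ _ hdeg)

theorem lco_eq_leadingCoeff (f : MvPolynomial (V × (Fin r → ℕ)) K) :
    lco lo f = h.toMonomialOrder.leadingCoeff f := by
  rw [lco, lmo_eq_degree h]
  rfl

theorem sPolynomial_eq_smul_spoly {f g : MvPolynomial (V × (Fin r → ℕ)) K} (hf : f ≠ 0)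
    (hg : g ≠ 0) :
    h.toMonomialOrder.sPolynomial f g =
      (h.toMonomialOrder.leadingCoeff f * h.toMonomialOrder.leadingCoeff g) • spoly lo f g := by
  have hcf := h.toMonomialOrder.leadingCoeff_ne_zero_iff.2 hf
  have hcg := h.toMonomialOrder.leadingCoeff_ne_zero_iff.2 hg
  rw [MonomialOrder.sPolynomial_def, spoly, lmo_eq_degree h, lmo_eq_degree h,
    lco_eq_leadingCoeff h, lco_eq_leadingCoeff h, lcmMon_eq_sup, smul_sub, ← smul_mul_assoc,
    ← smul_mul_assoc, smul_monomial, smul_monomial, smul_eq_mul, smul_eq_mul,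
    mul_inv_cancel_right₀ hcg, mul_comm (h.toMonomialOrder.leadingCoeff f),
    mul_inv_cancel_right₀ hcf]

theorem hasGroebnerRep_iff {f : MvPolynomial (V × (Fin r → ℕ)) K} :
    HasGroebnerRep lo G f ↔
      f ∈ h.toMonomialOrder.boundedSpan G
        (Iic (h.toMonomialOrder.toSyn (h.toMonomialOrder.degree f))) := by
  simp only [HasGroebnerRep, lmo_eq_degree h, ← h.toSyn_le_iff, map_add]
  constructor
  · rintro ⟨n, q, g, hg, rfl, hq⟩
    refine Submodule.sum_mem _ fun i _ => ?_
    by_cases h0 : q i = 0 ∨ g i = 0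
    · rcases h0 with h0 | h0 <;> simp [h0]
    push Not at h0
    exact boundedSpan_mono (Iic_subset_Iic.2 (hq i h0.1 h0.2))
      (mul_mem_boundedSpan_Iic (q i) (mem_boundedSpan_Iic_degree (hg i)))
  · intro hf
    obtain ⟨n, c, v, hsum⟩ := Submodule.mem_span_set'.1 hf
    choose g hg a ha hv using fun i => (v i).2
    refine ⟨n, fun i => monomial (a i) (c i), g, hg, ?_, fun i hi _ => ?_⟩
    · rw [← hsum]
      exact Finset.sum_congr rfl fun i _ => by rw [hv i, smul_monomial_one_mul]
    · classical
      rw [h.toMonomialOrder.degree_monomial, if_neg (by simpa using hi), ← map_add]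
      exact ha i

theorem sPolynomial_mem_boundedSpan_of_hasGroebnerRep {f g : MvPolynomial (V × (Fin r → ℕ)) K}
    (hfg : f ≠ 0 → g ≠ 0 → HasGroebnerRep lo G (spoly lo f g)) :
    h.toMonomialOrder.sPolynomial f g ∈ h.toMonomialOrder.boundedSpan G
      (Iic (h.toMonomialOrder.toSyn
        (h.toMonomialOrder.degree (h.toMonomialOrder.sPolynomial f g)))) := by
  rcases eq_or_ne f 0 with rfl | hf
  · simp
  rcases eq_or_ne g 0 with rfl | hg
  · simp
  have hc : h.toMonomialOrder.leadingCoeff f * h.toMonomialOrder.leadingCoeff g ≠ 0 := by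
    simp [hf, hg]
  rw [sPolynomial_eq_smul_spoly h hf hg,
    h.toMonomialOrder.degree_smul_of_isRegular (IsRegular.of_ne_zero hc)]
  exact Submodule.smul_mem _ _ ((hasGroebnerRep_iff h).1 (hfg hf hg))

end Translation

theorem statement_8_general {K : Type*} [Field K] {X : Type*} {r : ℕ}
    (lo : LinearOrder ((X × (Fin r → ℕ)) →₀ ℕ)) (h : IsMonOrd lo)
    (I : Ideal (MvPolynomial (X × (Fin r → ℕ)) K))
    (G : Set (MvPolynomial (X × (Fin r → ℕ)) K))
    (hGen : I = Ideal.span G) :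
    IsGBasis lo G I ↔
      ∀ f ∈ G, ∀ g ∈ G, f ≠ 0 → g ≠ 0 → HasGroebnerRep lo G (spoly lo f g) := by
  have hGI : G ⊆ I := hGen ▸ Ideal.subset_span
  rw [isGBasis_iff hGI]
  simp only [lmo_eq_degree h]
  constructor
  · intro hLM f hf g hg _ _
    exact (hasGroebnerRep_iff h).2
      (MonomialOrder.mem_boundedSpan_Iic_degree_of_mem hGI hLM (spoly_mem (hGI hf) (hGI hg)))
  · intro hS f hf hf0
    exact MonomialOrder.exists_degree_le_of_mem_span
      (fun f hf g hg => sPolynomial_mem_boundedSpan_of_hasGroebnerRep h (hS f hf g hg))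
      (hGen ▸ hf) hf0

/-- **Buchberger's criterion.** Let `P` be endowed with a monomial
ordering and let `G` be a (possibly infinite) generating set of an ideal `I ⊆ P`.
Then `G` is a Gröbner basis of `I` if and only if for all nonzero `f, g ∈ G` the
S-polynomial `spoly(f,g)` has a Gröbner representation with respect to `G`. -/
theorem statement_8 {K : Type*} [Field K] {X : Type*} [Countable X] {r : ℕ}
    (lo : LinearOrder ((X × (Fin r → ℕ)) →₀ ℕ)) (h : IsMonOrd lo)
    (I : Ideal (MvPolynomial (X × (Fin r → ℕ)) K))
    (G : Set (MvPolynomial (X × (Fin r → ℕ)) K))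
    (hGen : I = Ideal.span G) :
    IsGBasis lo G I ↔
      ∀ f ∈ G, ∀ g ∈ G, f ≠ 0 → g ≠ 0 → HasGroebnerRep lo G (spoly lo f g) :=
  statement_8_general lo h I G hGen
end
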